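/- arXiv:2010.07186 — 5 statements merged into one kernel-verified Lean document; each statement's English description precedes it below -/
import Mathlib

section
/- Let K : ℝ → ℝ be continuous with K t < 0 for all t, and let f : ℝ → ℝ satisfy f'' + K·f = 0 with f 0 = 0 and f' 0 = -1. Then f' t < 0 for all t ∈ ℝ (in particular f' never vanishes). -/
/-!
The product `φ = f * f'` has derivative `f' ^ 2 - K f ^ 2 ≥ 0`, so it is monotone, and its
derivative at `0` is `f' 0 ^ 2 = 1`. A monotone function with nonzero derivative at `0` takes
the value `φ 0` only at `0`; since `φ 0 = 0`, the derivative `f'` vanishes nowhere, and being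
continuous with `f' 0 = -1` it is negative everywhere.
-/

open Filter Set Topology

theorem Monotone.eq_of_apply_eq_of_hasDerivAt {φ : ℝ → ℝ} {c a t : ℝ} (hφ : Monotone φ)
    (hd : HasDerivAt φ c a) (hc : c ≠ 0) (ht : φ t = φ a) : t = a := by
  have hne : ∀ᶠ z in 𝓝[≠] a, φ z ≠ φ a := hd.eventually_ne hc
  by_contra hta
  rcases lt_or_gt_of_ne hta with hlt | hgt
  · have hconst : ∀ᶠ z in 𝓝[<] a, φ z = φ a := by
      filter_upwards [Icc_mem_nhdsLT hlt] with z hz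
      exact le_antisymm (hφ hz.2) (ht ▸ hφ hz.1)
    have hne' := hne.filter_mono (nhdsWithin_mono a fun _ h => ne_of_lt h)
    obtain ⟨z, hz, hz'⟩ := (hconst.and hne').exists
    exact hz' hz
  · have hconst : ∀ᶠ z in 𝓝[>] a, φ z = φ a := by
      filter_upwards [Icc_mem_nhdsGT hgt] with z hz
      exact le_antisymm (ht ▸ hφ hz.2) (hφ hz.1)
    have hne' := hne.filter_mono (nhdsWithin_mono a fun _ h => ne_of_gt h)
    obtain ⟨z, hz, hz'⟩ := (hconst.and hne').exists
    exact hz' hz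

section ODE

variable {K f : ℝ → ℝ}

theorem hasDerivAt_mul_deriv_of_ode (hf : ContDiff ℝ 2 f)
    (hode : ∀ t, deriv (deriv f) t + K t * f t = 0) (t : ℝ) :
    HasDerivAt (fun s => f s * deriv f s) (deriv f t ^ 2 - K t * f t ^ 2) t := by
  have hf' : HasDerivAt f (deriv f t) t := (hf.differentiable two_ne_zero t).hasDerivAt
  have hf'' : HasDerivAt (deriv f) (deriv (deriv f) t) t :=
    (hf.differentiable_deriv_two t).hasDerivAt
  exact (hf'.mul hf'').congr_deriv (by linear_combination f t * hode t)

theorem monotone_mul_deriv_of_ode (hKnonpos : ∀ t, K t ≤ 0) (hf : ContDiff ℝ 2 f)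
    (hode : ∀ t, deriv (deriv f) t + K t * f t = 0) :
    Monotone (fun s => f s * deriv f s) :=
  monotone_of_hasDerivAt_nonneg (hasDerivAt_mul_deriv_of_ode hf hode) fun t => by
    have hKf : K t * f t ^ 2 ≤ 0 := mul_nonpos_of_nonpos_of_nonneg (hKnonpos t) (sq_nonneg _)
    exact sub_nonneg.2 (hKf.trans (sq_nonneg _))

end ODE

theorem jacobi_deriv_neg_general (K f : ℝ → ℝ)
    (hKneg : ∀ t, K t < 0)
    (hf : ContDiff ℝ 2 f)
    (hode : ∀ t, deriv (deriv f) t + K t * f t = 0)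
    (h0 : f 0 = 0) (h0' : deriv f 0 = -1) :
    ∀ t, deriv f t < 0 := by
  have hmono := monotone_mul_deriv_of_ode (fun t => (hKneg t).le) hf hode
  have hne : ∀ t, deriv f t ≠ 0 := by
    intro t ht
    have ht0 : t = 0 := hmono.eq_of_apply_eq_of_hasDerivAt (hasDerivAt_mul_deriv_of_ode hf hode 0)
      (by simp [h0, h0']) (by simp [ht, h0])
    rw [ht0, h0'] at ht
    norm_num at ht
  intro t
  by_contra! hpos
  obtain ⟨z, -, hz⟩ := isPreconnected_univ.intermediate_value (mem_univ 0) (mem_univ t)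
    (hf.continuous_deriv one_le_two).continuousOn ⟨h0' ▸ by norm_num, hpos⟩
  exact hne z hz

theorem jacobi_deriv_neg (K f : ℝ → ℝ)
    (hK : Continuous K) (hKneg : ∀ t, K t < 0)
    (hf : ContDiff ℝ 2 f)
    (hode : ∀ t, deriv (deriv f) t + K t * f t = 0)
    (h0 : f 0 = 0) (h0' : deriv f 0 = -1) :
    ∀ t, deriv f t < 0 :=
  jacobi_deriv_neg_general K f hKneg hf hode h0 h0'
end

section
/- Let K : ℝ → ℝ be continuous with K t ≤ -M for all t, where M > 0, and let f : ℝ → ℝ satisfy f'' + K·f = 0 with f 0 = 0, f' 0 = -1. Then f is strictly decreasing, negative on (0,∞), and unbounded below as t → ∞ (i.e. f(t) → -∞). -/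
/-!
On the right half-line, as long as `f ≤ 0` we have `f'' = -K f ≤ 0`, so `f' ≤ f'(0) = -1` and
hence `f t ≤ -t`. A first-zero argument therefore shows that `f` never returns to `0` after
leaving it, so `f' ≤ -1` on all of `[0, ∞)`. The reflection `f ↦ (t ↦ -f (-t))`,
`K ↦ (t ↦ K (-t))` preserves both the equation and the initial data, which gives `f' ≤ -1` on
`(-∞, 0]` as well.
-/

open Set Filter Topology

theorem HasDerivAt.eventually_lt_of_deriv_neg {f : ℝ → ℝ} {c x : ℝ} (hf : HasDerivAt f c x)
    (hc : c < 0) : ∀ᶠ t in 𝓝[>] x, f t < f x := by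
  have hslope := (hasDerivWithinAt_iff_tendsto_slope' (lt_irrefl x)).1
    (hf.hasDerivWithinAt (s := Ioi x))
  filter_upwards [hslope.eventually_lt_const hc, self_mem_nhdsWithin] with t hst (ht : x < t)
  rwa [slope_def_field, div_lt_iff₀ (sub_pos.2 ht), zero_mul, sub_neg] at hst

theorem neg_of_pos_of_continuous_induction {g : ℝ → ℝ} (hg : Continuous g)
    (hnear : ∀ᶠ t in 𝓝[>] 0, g t < 0)
    (hstep : ∀ T > 0, (∀ t ∈ Ioo 0 T, g t < 0) → g T < 0) :
    ∀ t > 0, g t < 0 := by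
  intro t₀ ht₀
  by_contra! hg₀
  obtain ⟨ε, hε, hεneg⟩ := mem_nhdsGT_iff_exists_Ioc_subset.1 hnear
  have hεt₀ : ε ≤ t₀ := by
    by_contra! h
    exact (hεneg ⟨ht₀, h.le⟩ : g t₀ < 0).not_ge hg₀
  obtain ⟨T, ⟨⟨hεT, hTt₀⟩, hT⟩, hmin⟩ :=
    (isCompact_Icc.inter_right (isClosed_le continuous_const hg)).exists_isLeast
      ⟨t₀, ⟨hεt₀, le_rfl⟩, hg₀⟩
  refine (hstep T (hε.trans_le hεT) fun t ht => ?_).not_ge hT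
  rcases le_or_gt t ε with htε | htε
  · exact hεneg ⟨ht.1, htε⟩
  · by_contra! h
    exact ht.2.not_ge (hmin ⟨⟨htε.le, ht.2.le.trans hTt₀⟩, h⟩)

theorem image_le_mul_of_deriv_le {f : ℝ → ℝ} (hf : Differentiable ℝ f) (h0 : f 0 = 0)
    {D : Set ℝ} (hD : Convex ℝ D) (h0D : 0 ∈ D) {c : ℝ} (hc : ∀ t ∈ D, deriv f t ≤ c) {T : ℝ}
    (hT : T ∈ D) (hT0 : 0 ≤ T) : f T ≤ c * T := by
  have := hD.image_sub_le_mul_sub_of_deriv_le hf.continuous.continuousOn hf.differentiableOn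
    (fun t ht => hc t (interior_subset ht)) 0 h0D T hT hT0
  simpa [h0] using this

theorem deriv_neg_comp_neg (f : ℝ → ℝ) (t : ℝ) : deriv (fun s => -f (-s)) t = deriv f (-t) := by
  rw [deriv.fun_neg, deriv_comp_neg, neg_neg]

structure IsJacobiSolution (K f : ℝ → ℝ) : Prop where
  differentiable : Differentiable ℝ f
  differentiable_deriv : Differentiable ℝ (deriv f)
  deriv_deriv : ∀ t, deriv (deriv f) t = -(K t * f t)

namespace IsJacobiSolution

variable {K f : ℝ → ℝ}

theorem comp_neg (hJ : IsJacobiSolution K f) :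
    IsJacobiSolution (fun t => K (-t)) (fun t => -f (-t)) := by
  have hderiv : deriv (fun t => -f (-t)) = fun t => deriv f (-t) :=
    funext (deriv_neg_comp_neg f)
  refine ⟨(hJ.differentiable.comp differentiable_neg).neg, ?_, fun t => ?_⟩
  · rw [hderiv]
    exact hJ.differentiable_deriv.comp differentiable_neg
  · rw [hderiv, deriv_comp_neg, hJ.deriv_deriv]
    ring

theorem deriv_le_deriv_zero_of_nonpos (hJ : IsJacobiSolution K f) (hK : ∀ t, K t ≤ 0) {T : ℝ}
    (hf : ∀ t ∈ Ioo 0 T, f t ≤ 0) : ∀ t ∈ Icc 0 T, deriv f t ≤ deriv f 0 := by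
  have hanti : AntitoneOn (deriv f) (Icc 0 T) := by
    refine antitoneOn_of_deriv_nonpos (convex_Icc 0 T)
      hJ.differentiable_deriv.continuous.continuousOn
      hJ.differentiable_deriv.differentiableOn fun t ht => ?_
    rw [interior_Icc] at ht
    rw [hJ.deriv_deriv, neg_nonpos]
    exact mul_nonneg_of_nonpos_of_nonpos (hK t) (hf t ht)
  exact fun t ht => hanti (left_mem_Icc.2 (ht.1.trans ht.2)) ht ht.1

theorem deriv_le_deriv_zero (hJ : IsJacobiSolution K f) (hK : ∀ t, K t ≤ 0) (h0 : f 0 = 0)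
    (h0' : deriv f 0 < 0) {t : ℝ} (ht : 0 ≤ t) : deriv f t ≤ deriv f 0 := by
  have hnear : ∀ᶠ s in 𝓝[>] 0, f s < 0 :=
    ((hJ.differentiable 0).hasDerivAt.eventually_lt_of_deriv_neg h0').mono fun _ hs => h0 ▸ hs
  have hneg : ∀ s > 0, f s < 0 := by
    refine neg_of_pos_of_continuous_induction hJ.differentiable.continuous hnear
      fun T hT hfT => ?_
    have hle := image_le_mul_of_deriv_le hJ.differentiable h0 (convex_Icc 0 T) (left_mem_Icc.2 hT.le)
      (hJ.deriv_le_deriv_zero_of_nonpos hK fun s hs => (hfT s hs).le) (right_mem_Icc.2 hT.le)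
      hT.le
    exact hle.trans_lt (mul_neg_of_neg_of_pos h0' hT)
  exact hJ.deriv_le_deriv_zero_of_nonpos hK (fun s hs => (hneg s hs.1).le) t (right_mem_Icc.2 ht)

end IsJacobiSolution

theorem jacobi_unbounded_general (K f : ℝ → ℝ) (M : ℝ) (hM : 0 < M)
    (hKle : ∀ t, K t ≤ -M)
    (hf : ContDiff ℝ 2 f)
    (hode : ∀ t, deriv (deriv f) t + K t * f t = 0)
    (h0 : f 0 = 0) (h0' : deriv f 0 = -1) :
    StrictAnti f ∧ (∀ t > 0, f t < 0) ∧
      Filter.Tendsto f Filter.atTop Filter.atBot := by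
  have hJ : IsJacobiSolution K f :=
    ⟨hf.differentiable (by norm_num), hf.differentiable_deriv_two,
      fun t => eq_neg_of_add_eq_zero_left (hode t)⟩
  have hK : ∀ t, K t ≤ 0 := fun t => (hKle t).trans (neg_nonpos.2 hM.le)
  have hneg1 : deriv f 0 < 0 := by rw [h0']; norm_num
  have hright : ∀ t ≥ 0, deriv f t ≤ -1 := fun t ht =>
    h0' ▸ hJ.deriv_le_deriv_zero hK h0 hneg1 ht
  have hleft : ∀ t ≤ 0, deriv f t ≤ -1 := fun t ht => by
    have := hJ.comp_neg.deriv_le_deriv_zero (fun s => hK (-s)) (by simp [h0])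
      (by simpa [deriv_neg_comp_neg] using hneg1) (neg_nonneg.2 ht)
    simpa [deriv_neg_comp_neg, h0'] using this
  have hanti : StrictAnti f := strictAnti_of_deriv_neg fun t =>
    ((le_total 0 t).elim (hright t) (hleft t)).trans_lt (by norm_num)
  refine ⟨hanti, fun t ht => h0 ▸ hanti ht, ?_⟩
  refine tendsto_atBot_mono' atTop ?_ tendsto_neg_atTop_atBot
  filter_upwards [eventually_ge_atTop 0] with t ht
  simpa using image_le_mul_of_deriv_le hJ.differentiable h0 (convex_Ici 0) self_mem_Ici hright ht ht

theorem jacobi_unbounded (K f : ℝ → ℝ) (M : ℝ) (hM : 0 < M)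
    (hK : Continuous K) (hKle : ∀ t, K t ≤ -M)
    (hf : ContDiff ℝ 2 f)
    (hode : ∀ t, deriv (deriv f) t + K t * f t = 0)
    (h0 : f 0 = 0) (h0' : deriv f 0 = -1) :
    StrictAnti f ∧ (∀ t > 0, f t < 0) ∧
      Filter.Tendsto f Filter.atTop Filter.atBot :=
  jacobi_unbounded_general K f M hM hKle hf hode h0 h0'
end

section
/- Let K : ℝ → ℝ be continuous with K t < 0 for all t, and let f satisfy f'' + K·f = 0 with f 0 = 1 and f' 0 = 0. Then f t ≥ 1 for all t ∈ ℝ. -/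
/-!
Where `f > 0` the equation gives `f'' = -K f > 0`, so `f` is convex there. Starting from
`f 0 = 1`, `f' 0 = 0`, convexity keeps `f' ≥ 0` and hence `f ≥ 1` up to the first zero of `f`
to the right of `0`, so that zero cannot exist; the left half-line follows by reflection.
-/

open Set

lemma exists_first_nonpos {f : ℝ → ℝ} (hf : Continuous f) {a s : ℝ} (ha : 0 < f a)
    (has : a ≤ s) (hs : f s ≤ 0) :
    ∃ c, a < c ∧ f c ≤ 0 ∧ ∀ x ∈ Ico a c, 0 < f x := by
  set Z := Icc a s ∩ {x | f x ≤ 0}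
  have hZ : IsClosed Z := isClosed_Icc.inter (isClosed_le hf continuous_const)
  have hZbdd : BddBelow Z := ⟨a, fun x hx => hx.1.1⟩
  have hcZ : sInf Z ∈ Z := hZ.csInf_mem ⟨s, ⟨has, le_rfl⟩, hs⟩ hZbdd
  refine ⟨sInf Z, hcZ.1.1.lt_of_ne ?_, hcZ.2, fun x hx => ?_⟩
  · rintro hac
    exact (hac ▸ hcZ.2).not_gt ha
  · by_contra! hfx
    exact hx.2.not_ge (csInf_le hZbdd ⟨⟨hx.1, hx.2.le.trans hcZ.1.2⟩, hfx⟩)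

lemma monotoneOn_Icc_of_deriv_nonneg_of_deriv_deriv_nonneg {f : ℝ → ℝ} {a b : ℝ}
    (hf : Differentiable ℝ f) (hf' : Differentiable ℝ (deriv f)) (ha : 0 ≤ deriv f a)
    (hf'' : ∀ x ∈ Ioo a b, 0 ≤ deriv (deriv f) x) :
    MonotoneOn f (Icc a b) := by
  have hmono : MonotoneOn (deriv f) (Icc a b) :=
    monotoneOn_of_deriv_nonneg (convex_Icc a b) hf'.continuous.continuousOn
      hf'.differentiableOn (by rwa [interior_Icc])
  refine monotoneOn_of_deriv_nonneg (convex_Icc a b) hf.continuous.continuousOn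
    hf.differentiableOn fun x hx => ?_
  rw [interior_Icc] at hx
  exact ha.trans (hmono (left_mem_Icc.2 (hx.1.trans hx.2).le) (Ioo_subset_Icc_self hx) hx.1.le)

lemma le_of_deriv_deriv_nonneg_of_pos {f : ℝ → ℝ} {a : ℝ}
    (hf : Differentiable ℝ f) (hf' : Differentiable ℝ (deriv f))
    (ha : 0 < f a) (ha' : 0 ≤ deriv f a) (hf'' : ∀ x, 0 < f x → 0 ≤ deriv (deriv f) x)
    {t : ℝ} (ht : a ≤ t) : f a ≤ f t := by
  have hpos : ∀ x ∈ Icc a t, 0 < f x := by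
    by_contra! ⟨s, hs, hfs⟩
    obtain ⟨c, hac, hfc, hfpos⟩ := exists_first_nonpos hf.continuous ha hs.1 hfs
    have := monotoneOn_Icc_of_deriv_nonneg_of_deriv_deriv_nonneg hf hf' ha'
      (fun x hx => hf'' x (hfpos x (Ioo_subset_Ico_self hx)))
      (left_mem_Icc.2 hac.le) (right_mem_Icc.2 hac.le) hac.le
    linarith
  exact monotoneOn_Icc_of_deriv_nonneg_of_deriv_deriv_nonneg hf hf' ha'
    (fun x hx => hf'' x (hpos x (Ioo_subset_Icc_self hx)))
    (left_mem_Icc.2 ht) (right_mem_Icc.2 ht) ht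

lemma deriv_deriv_comp_neg (f : ℝ → ℝ) (x : ℝ) :
    deriv (deriv fun y => f (-y)) x = deriv (deriv f) (-x) := by
  have : deriv (fun y => f (-y)) = fun y => -deriv f (-y) := funext (deriv_comp_neg f)
  rw [this, deriv.fun_neg, deriv_comp_neg, neg_neg]

theorem jacobi_ge_one_general (K f : ℝ → ℝ)
    (hKneg : ∀ t, K t < 0)
    (hf : ContDiff ℝ 2 f)
    (hode : ∀ t, deriv (deriv f) t + K t * f t = 0)
    (h0 : f 0 = 1) (h0' : deriv f 0 = 0) :
    ∀ t, 1 ≤ f t := by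
  have hf'' : ∀ x, 0 < f x → 0 ≤ deriv (deriv f) x := fun x hx => by
    linarith [hode x, mul_neg_of_neg_of_pos (hKneg x) hx]
  set g : ℝ → ℝ := fun y => f (-y)
  have hg : ContDiff ℝ 2 g := hf.comp contDiff_neg
  have hg'' : ∀ y, 0 < g y → 0 ≤ deriv (deriv g) y := fun y hy => by
    rw [deriv_deriv_comp_neg]
    exact hf'' (-y) hy
  intro t
  rcases le_total 0 t with ht | ht
  · simpa [h0] using le_of_deriv_deriv_nonneg_of_pos (hf.differentiable two_ne_zero)
      hf.differentiable_deriv_two (by simp [h0]) h0'.ge hf'' ht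
  · simpa [g, h0] using le_of_deriv_deriv_nonneg_of_pos (hg.differentiable two_ne_zero)
      hg.differentiable_deriv_two (by simp [g, h0]) (by simp [g, deriv_comp_neg, h0']) hg''
      (neg_nonneg.2 ht)

theorem jacobi_ge_one (K f : ℝ → ℝ)
    (hK : Continuous K) (hKneg : ∀ t, K t < 0)
    (hf : ContDiff ℝ 2 f)
    (hode : ∀ t, deriv (deriv f) t + K t * f t = 0)
    (h0 : f 0 = 1) (h0' : deriv f 0 = 0) :
    ∀ t, 1 ≤ f t :=
  jacobi_ge_one_general K f hKneg hf hode h0 h0'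
end

section
/- Let a₀ = 1 (as a polynomial in x) and a_{k+1} = D a_k where D = m·x + ((x²-1)/2)·d/dx acts on polynomials, for a fixed real parameter m. Define the formal power series f(x,z) = Σ_{n≥0} a_n(x) zⁿ/n!. Then the 'constant in x' coefficient of f, i.e. f(0,z) evaluated via the PDE ∂f/∂z = m x f + ((x²-1)/2) ∂f/∂x with f(x,0)=1, equals cosh^{-2m}(z/2) = 2^m (1 + cosh z)^{-m}. -/
private lemma abs_sinh_lt_cosh (u : ℝ) : |Real.sinh u| < Real.cosh u := by
  have h1 : |Real.sinh u| ^ 2 < Real.cosh u ^ 2 := by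
    rw [sq_abs, Real.cosh_sq]; linarith
  exact lt_of_pow_lt_pow_left₀ 2 (Real.cosh_pos u).le h1

open Set in
theorem pde_characteristics (m : ℝ) (f : ℝ → ℝ → ℝ)
    (hsmooth : ContDiffOn ℝ (⊤ : ℕ∞) (fun p : ℝ × ℝ => f p.1 p.2)
        ((Ioo (-1 : ℝ) 1) ×ˢ (univ : Set ℝ)))
    (hpde : ∀ x ∈ Ioo (-1 : ℝ) 1, ∀ z : ℝ,
      deriv (fun z' => f x z') z =
        m * x * f x z + ((x ^ 2 - 1) / 2) * deriv (fun x' => f x' z) x)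
    (hinit : ∀ x ∈ Ioo (-1 : ℝ) 1, f x 0 = 1) :
    ∀ z : ℝ, f 0 z = Real.cosh (z / 2) ^ (-(2 * m)) := by
  intro z
  set S : Set (ℝ × ℝ) := (Ioo (-1 : ℝ) 1) ×ˢ (univ : Set ℝ) with hSdef
  have hS : IsOpen S := isOpen_Ioo.prod isOpen_univ
  set F : ℝ × ℝ → ℝ := fun p => f p.1 p.2 with hFdef
  -- characteristic curve data
  set c : ℝ → ℝ := fun t => Real.cosh ((t - z) / 2) with hcdef
  set s : ℝ → ℝ := fun t => Real.sinh ((t - z) / 2) with hsdef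
  set X : ℝ → ℝ := fun t => s t / c t with hXdef
  have hcpos : ∀ t, 0 < c t := fun t => Real.cosh_pos _
  have hXmem : ∀ t, X t ∈ Ioo (-1 : ℝ) 1 := by
    intro t
    have h := abs_lt.mp (abs_sinh_lt_cosh ((t - z) / 2))
    constructor
    · rw [hXdef]
      rw [neg_lt, ← neg_div]
      exact (div_lt_one (hcpos t)).mpr (by simpa using (neg_lt.mp h.1))
    · exact (div_lt_one (hcpos t)).mpr h.2
  -- derivatives of c, s, X
  have hu : ∀ t : ℝ, HasDerivAt (fun t => (t - z) / 2) (1 / 2) t := by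
    intro t
    simpa using ((hasDerivAt_id t).sub_const z).div_const 2
  have hc' : ∀ t, HasDerivAt c (s t / 2) t := by
    intro t
    have := (Real.hasDerivAt_cosh ((t - z) / 2)).comp t (hu t)
    refine this.congr_deriv ?_
    simp [hsdef]; ring
  have hs' : ∀ t, HasDerivAt s (c t / 2) t := by
    intro t
    have := (Real.hasDerivAt_sinh ((t - z) / 2)).comp t (hu t)
    refine this.congr_deriv ?_
    simp [hcdef]; ring
  have hX' : ∀ t, HasDerivAt X ((1 - X t ^ 2) / 2) t := by
    intro t
    have h := (hs' t).div (hc' t) (hcpos t).ne'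
    refine h.congr_deriv ?_
    have key : c t ^ 2 - s t ^ 2 = 1 := Real.cosh_sq_sub_sinh_sq _
    rw [hXdef]
    field_simp
    try ring_nf
    try nlinarith [key, sq_nonneg (c t), sq_nonneg (s t)]
    rw [← mul_pow, mul_inv_cancel₀ (hcpos t).ne', one_pow]
  -- f is differentiable on S
  have hFd : ∀ p ∈ S, HasFDerivAt F (fderiv ℝ F p) p := fun p hp =>
    ((hsmooth.contDiffAt (hS.mem_nhds hp)).differentiableAt (by simp)).hasFDerivAt
  -- partial derivatives as fderiv applications
  have hpz : ∀ x ∈ Ioo (-1 : ℝ) 1, ∀ y : ℝ,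
      deriv (fun z' => f x z') y = fderiv ℝ F (x, y) (0, 1) := by
    intro x hx y
    have hline : HasDerivAt (fun z' : ℝ => ((x : ℝ), z')) ((0 : ℝ), (1 : ℝ)) y :=
      (hasDerivAt_const _ _).prodMk (hasDerivAt_id _)
    have := (hFd (x, y) ⟨hx, mem_univ _⟩).comp_hasDerivAt y hline
    exact this.deriv
  have hpx : ∀ x ∈ Ioo (-1 : ℝ) 1, ∀ y : ℝ,
      deriv (fun x' => f x' y) x = fderiv ℝ F (x, y) (1, 0) := by
    intro x hx y
    have hline : HasDerivAt (fun x' : ℝ => ((x' : ℝ), y)) ((1 : ℝ), (0 : ℝ)) x :=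
      (hasDerivAt_id _).prodMk (hasDerivAt_const _ _)
    have := (hFd (x, y) ⟨hx, mem_univ _⟩).comp_hasDerivAt x hline
    exact this.deriv
  -- g along the characteristic
  set g : ℝ → ℝ := fun t => f (X t) t with hgdef
  have hg' : ∀ t, HasDerivAt g (m * X t * g t) t := by
    intro t
    have hmem : ((X t, t) : ℝ × ℝ) ∈ S := ⟨hXmem t, mem_univ t⟩
    have hγ : HasDerivAt (fun t => ((X t, t) : ℝ × ℝ)) (((1 - X t ^ 2) / 2 : ℝ), (1 : ℝ)) t :=
      (hX' t).prodMk (hasDerivAt_id t)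
    have h0 : HasDerivAt (F ∘ fun t => ((X t, t) : ℝ × ℝ))
        (fderiv ℝ F (X t, t) (((1 - X t ^ 2) / 2 : ℝ), (1 : ℝ))) t :=
      HasFDerivAt.comp_hasDerivAt t (by exact hFd _ hmem) hγ
    have hlin : fderiv ℝ F (X t, t) (((1 - X t ^ 2) / 2 : ℝ), (1 : ℝ)) =
        ((1 - X t ^ 2) / 2) * fderiv ℝ F (X t, t) (1, 0) + fderiv ℝ F (X t, t) (0, 1) := by
      have hv : (((1 - X t ^ 2) / 2 : ℝ), (1 : ℝ)) =
          ((1 - X t ^ 2) / 2) • ((1 : ℝ), (0 : ℝ)) + ((0 : ℝ), (1 : ℝ)) := by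
        simp [Prod.ext_iff]
      rw [hv, map_add, map_smul]
      simp [smul_eq_mul]
    have hz := hpde (X t) (hXmem t) t
    rw [hpz (X t) (hXmem t) t, hpx (X t) (hXmem t) t] at hz
    have h0' : HasDerivAt g (fderiv ℝ F (X t, t) (((1 - X t ^ 2) / 2 : ℝ), (1 : ℝ))) t := h0
    refine h0'.congr_deriv ?_
    rw [hlin, hz, hgdef]
    ring
  -- h is constant
  set h : ℝ → ℝ := fun t => g t * c t ^ (-(2 * m)) with hhdef
  have hh' : ∀ t, HasDerivAt h 0 t := by
    intro t
    have hrc : HasDerivAt (fun t => c t ^ (-(2 * m)))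
        ((-(2 * m)) * c t ^ (-(2 * m) - 1) * (s t / 2)) t := by
      have := (Real.hasDerivAt_rpow_const (p := -(2 * m)) (Or.inl (hcpos t).ne')).comp t (hc' t)
      exact this
    have hprod := (hg' t).mul hrc
    refine hprod.congr_deriv ?_
    rw [Real.rpow_sub_one (hcpos t).ne']
    rw [hXdef]
    field_simp
    try ring
  have hconst : h z = h 0 :=
    is_const_of_deriv_eq_zero (fun t => (hh' t).differentiableAt)
      (fun t => (hh' t).deriv) z 0
  have hXz : X z = 0 := by simp [hXdef, hsdef]
  have hcz : c z = 1 := by simp [hcdef]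
  have hc0 : c 0 = Real.cosh (z / 2) := by
    rw [hcdef]
    show Real.cosh ((0 - z) / 2) = Real.cosh (z / 2)
    rw [show (0 - z) / 2 = -(z / 2) by ring, Real.cosh_neg]
  have hz1 : h z = f 0 z := by
    rw [hhdef]
    show g z * c z ^ (-(2 * m)) = f 0 z
    rw [hcz, hgdef]
    show f (X z) z * (1 : ℝ) ^ (-(2 * m)) = f 0 z
    rw [hXz, Real.one_rpow, mul_one]
  have hz0 : h 0 = Real.cosh (z / 2) ^ (-(2 * m)) := by
    rw [hhdef]
    show g 0 * c 0 ^ (-(2 * m)) = _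
    rw [hc0, hgdef]
    show f (X 0) 0 * _ = _
    rw [hinit (X 0) (hXmem 0), one_mul]
  rw [← hz1, hconst, hz0]
end

section
/- Let F : ℝ² → ℝ² be a C¹ map whose derivative DF(s,t) at every point, expressed in a global frame, is invertible with operator norm of the inverse uniformly bounded (e.g. DF(ṡ,ṫ) = ṡ f₁(s,t) e₁ + ṫ e₂ with f₁ ≥ 1 everywhere and the frame (e₁,e₂) uniformly comparable to the standard basis). Then F is a diffeomorphism onto ℝ² (Hadamard's global inverse function theorem in this special diagonal case). -/
/-!
By the inverse function theorem `F` is a local homeomorphism, and the bound on `DF⁻¹` makes its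
local inverses `C`-Lipschitz. A lift through `F` of an `L`-Lipschitz path on `[0, 1]` is therefore
`C L`-Lipschitz and cannot leave a compact ball, over which the local inverses have a uniform
radius; so lifts can be continued in steps of fixed length, and every locally Lipschitz path lifts.
Lifting segments gives surjectivity. If `F a = F b`, the loop `F ∘ [a, b]` is contracted linearly
to the constant loop; every intermediate loop lifts from `a`, and the monodromy theorem for the
separated local homeomorphism `F` gives `a = b`. The inverse is then `C¹` by the inverse function
theorem.
-/

open Function Set Filter Metric Topology unitInterval
open scoped NNReal

structure IsLipschitzLocalSection {X Y : Type*} [PseudoMetricSpace X] [PseudoMetricSpace Y]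
    (F : X → Y) (C : ℝ≥0) (ψ : Y → X) (b : X) (r : ℝ) : Prop where
  apply_image : ψ (F b) = b
  right_inv : ∀ z ∈ ball (F b) r, F (ψ z) = z
  lipschitzOnWith : LipschitzOnWith C ψ (ball (F b) r)

namespace IsLipschitzLocalSection

variable {X Y : Type*} [PseudoMetricSpace X] [PseudoMetricSpace Y] {F : X → Y} {C : ℝ≥0}
  {ψ : Y → X} {r : ℝ}

theorem mono {b : X} {r' : ℝ} (hψ : IsLipschitzLocalSection F C ψ b r) (hr : r' ≤ r) :
    IsLipschitzLocalSection F C ψ b r' where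
  apply_image := hψ.apply_image
  right_inv z hz := hψ.right_inv z (ball_subset_ball hr hz)
  lipschitzOnWith := hψ.lipschitzOnWith.mono (ball_subset_ball hr)

theorem exists_extend_lift {p : ℝ → Y} {L : ℝ≥0} {γ : ℝ → X} {a a' : ℝ}
    (hψ : IsLipschitzLocalSection F C ψ (γ a) r) (hp : LipschitzOnWith L p (Icc a a'))
    (hr : L * (a' - a) < r) (ha : 0 ≤ a) (haa' : a ≤ a') (hγ : ContinuousOn γ (Icc 0 a))
    (hγp : ∀ t ∈ Icc 0 a, F (γ t) = p t) :
    ∃ γ' : ℝ → X, γ' 0 = γ 0 ∧ ContinuousOn γ' (Icc 0 a') ∧ (∀ t ∈ Icc 0 a', F (γ' t) = p t) ∧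
      dist (γ' a') (γ a) ≤ C * L * (a' - a) := by
  have hpa : p a = F (γ a) := (hγp a ⟨ha, le_rfl⟩).symm
  have hdist : ∀ t ∈ Icc a a', dist (p t) (p a) ≤ L * (a' - a) := fun t ht ↦ by
    calc dist (p t) (p a) ≤ L * dist t a := hp.dist_le_mul t ht a ⟨le_rfl, haa'⟩
      _ ≤ L * (a' - a) := by
        gcongr; rw [Real.dist_eq, abs_of_nonneg (by linarith [ht.1])]; linarith [ht.2]
  have hball : MapsTo p (Icc a a') (ball (F (γ a)) r) := fun t ht ↦ by
    rw [mem_ball, ← hpa]; exact (hdist t ht).trans_lt hr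
  have hψa : ψ (p a) = γ a := by rw [hpa, hψ.apply_image]
  set γ' : ℝ → X := fun t ↦ if t ≤ a then γ t else ψ (p t)
  have hleft : EqOn γ' γ (Icc 0 a) := fun t ht ↦ if_pos ht.2
  have hright : EqOn γ' (ψ ∘ p) (Icc a a') := fun t ht ↦ by
    rcases ht.1.eq_or_lt with rfl | h
    · exact (if_pos le_rfl).trans hψa.symm
    · exact if_neg (not_le.2 h)
  refine ⟨γ', hleft ⟨le_rfl, ha⟩, ?_, fun t ht ↦ ?_, ?_⟩
  · rw [← Icc_union_Icc_eq_Icc ha haa']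
    exact (hγ.congr hleft).union_of_isClosed
      ((hψ.lipschitzOnWith.continuousOn.comp hp.continuousOn hball).congr hright)
      isClosed_Icc isClosed_Icc
  · rcases le_total t a with h | h
    · rw [hleft ⟨ht.1, h⟩, hγp t ⟨ht.1, h⟩]
    · rw [hright ⟨h, ht.2⟩]; exact hψ.right_inv _ (hball ⟨h, ht.2⟩)
  · rw [hright ⟨haa', le_rfl⟩, Function.comp_apply, ← hψa, mul_assoc]
    calc dist (ψ (p a')) (ψ (p a)) ≤ C * dist (p a') (p a) :=
          hψ.lipschitzOnWith.dist_le_mul _ (hball ⟨haa', le_rfl⟩) _ (hball ⟨le_rfl, haa'⟩)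
      _ ≤ C * (L * (a' - a)) := by gcongr; exact hdist a' ⟨haa', le_rfl⟩

theorem exists_lift_Icc_min {p : ℝ → Y} {L : ℝ≥0} {x : X}
    (hsec : ∀ b ∈ closedBall x (C * L), ∃ ψ, IsLipschitzLocalSection F C ψ b r)
    (hp : LipschitzOnWith L p (Icc 0 1)) (hx : F x = p 0) {h : ℝ} (hh : 0 < h) (hLh : L * h < r)
    (n : ℕ) :
    ∃ γ : ℝ → X, γ 0 = x ∧ ContinuousOn γ (Icc 0 (min (n * h) 1)) ∧
      (∀ t ∈ Icc 0 (min (n * h) 1), F (γ t) = p t) ∧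
      dist (γ (min (n * h) 1)) x ≤ C * L * min (n * h) 1 := by
  induction n with
  | zero =>
    refine ⟨fun _ ↦ x, rfl, continuousOn_const, fun t ht ↦ ?_, by simp⟩
    rw [Nat.cast_zero, zero_mul, min_eq_left zero_le_one, Icc_self, mem_singleton_iff] at ht
    rw [ht, hx]
  | succ n ih =>
    obtain ⟨γ, hγ0, hγ, hγp, hγx⟩ := ih
    set a := min (n * h) 1
    set a' := min ((n + 1 : ℕ) * h) 1
    have ha : 0 ≤ a := le_min (by positivity) zero_le_one
    have haa' : a ≤ a' := min_le_min_right _ (by gcongr; omega)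
    have ha' : a' ≤ 1 := min_le_right _ _
    have hstep : a' - a ≤ h :=
      calc a' - a ≤ |a' - a| := le_abs_self _
        _ ≤ max |((n + 1 : ℕ) : ℝ) * h - n * h| |(1 : ℝ) - 1| := abs_min_sub_min_le_max _ _ _ _
        _ = h := by push_cast; ring_nf; simp [abs_of_pos hh, hh.le]
    have hγa : γ a ∈ closedBall x (C * L) := by
      rw [mem_closedBall]
      calc dist (γ a) x ≤ C * L * a := hγx
        _ ≤ C * L := mul_le_of_le_one_right (by positivity) (min_le_right _ _)
    obtain ⟨ψ, hψ⟩ := hsec _ hγa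
    obtain ⟨γ', h0, hc, hγ'p, hd⟩ := hψ.exists_extend_lift (hp.mono (Icc_subset_Icc ha ha'))
      ((mul_le_mul_of_nonneg_left hstep L.2).trans_lt hLh) ha haa' hγ hγp
    refine ⟨γ', h0.trans hγ0, hc, hγ'p, ?_⟩
    calc dist (γ' a') x ≤ dist (γ' a') (γ a) + dist (γ a) x := dist_triangle _ _ _
      _ ≤ C * L * (a' - a) + C * L * a := add_le_add hd hγx
      _ = C * L * a' := by ring

end IsLipschitzLocalSection

variable {E E' : Type*} [NormedAddCommGroup E] [NormedSpace ℝ E]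
  [NormedAddCommGroup E'] [NormedSpace ℝ E']

def HasBoundedInverseFDeriv (F : E → E') (C : ℝ≥0) : Prop :=
  ∀ a, ∃ g : E ≃L[ℝ] E', HasStrictFDerivAt F (g : E →L[ℝ] E') a ∧
    ‖(g.symm : E' →L[ℝ] E)‖₊ ≤ C

namespace HasBoundedInverseFDeriv

variable {F : E → E'} {C : ℝ≥0}

theorem isLocalHomeomorph [CompleteSpace E] (hF : HasBoundedInverseFDeriv F C) :
    IsLocalHomeomorph F := fun a ↦ by
  obtain ⟨g, hg, -⟩ := hF a
  exact ⟨hg.toOpenPartialHomeomorph F, hg.mem_toOpenPartialHomeomorph_source,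
    hg.toOpenPartialHomeomorph_coe.symm⟩

theorem locallyLipschitz (hF : HasBoundedInverseFDeriv F C) : LocallyLipschitz F := fun a ↦ by
  obtain ⟨g, hg, -⟩ := hF a
  exact hg.exists_lipschitzOnWith

/-- One inverse-function-theorem chart at `b` provides the sections through all points near `b`. -/
theorem exists_isLipschitzLocalSection_nhds [CompleteSpace E] (hF : HasBoundedInverseFDeriv F C)
    (b : E) : ∃ r > 0, ∀ᶠ b' in 𝓝 b, ∃ ψ, IsLipschitzLocalSection F C ψ b' r := by
  obtain ⟨g, hg, -⟩ := hF b
  set φ := hg.toOpenPartialHomeomorph F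
  have hφ : (φ : E → E') = F := hg.toOpenPartialHomeomorph_coe
  obtain ⟨ρ, hρ, hρφ⟩ := isOpen_iff.1 φ.open_target _ hg.image_mem_toOpenPartialHomeomorph_target
  have hlip : LipschitzOnWith C φ.symm (ball (F b) ρ) := by
    refine (convex_ball _ _).lipschitzOnWith_of_nnnorm_hasFDerivWithin_le
      (f' := fun z ↦ ((hF (φ.symm z)).choose.symm : E' →L[ℝ] E)) (fun z hz ↦ ?_)
      (fun z _ ↦ (hF (φ.symm z)).choose_spec.2)
    have hz : z ∈ φ.target := hρφ hz
    refine (φ.hasFDerivAt_symm hz ?_).hasFDerivWithinAt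
    rw [hφ]
    exact (hF (φ.symm z)).choose_spec.1.hasFDerivAt
  refine ⟨ρ / 2, half_pos hρ, ?_⟩
  have hsource : φ.source ∈ 𝓝 b := φ.open_source.mem_nhds hg.mem_toOpenPartialHomeomorph_source
  have hnear : ∀ᶠ b' in 𝓝 b, F b' ∈ ball (F b) (ρ / 2) :=
    hg.continuousAt.eventually_mem (ball_mem_nhds _ (half_pos hρ))
  filter_upwards [hsource, hnear] with b' hb' hFb'
  have hball : ball (F b') (ρ / 2) ⊆ ball (F b) ρ :=
    ball_subset_ball' (by linarith [mem_ball.1 hFb'])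
  refine ⟨φ.symm, ?_, fun z hz ↦ ?_, hlip.mono hball⟩
  · rw [← hφ]; exact φ.left_inv hb'
  · rw [← hφ]; exact φ.right_inv (hρφ (hball hz))

theorem exists_isLipschitzLocalSection_of_isCompact [CompleteSpace E]
    (hF : HasBoundedInverseFDeriv F C) {K : Set E} (hK : IsCompact K) :
    ∃ r > 0, ∀ b ∈ K, ∃ ψ, IsLipschitzLocalSection F C ψ b r := by
  refine hK.induction_on ⟨1, one_pos, fun _ h ↦ h.elim⟩ ?_ ?_ ?_
  · exact fun s t hst ⟨r, hr, ht⟩ ↦ ⟨r, hr, fun b hb ↦ ht b (hst hb)⟩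
  · rintro s t ⟨r, hr, hs⟩ ⟨r', hr', ht⟩
    refine ⟨min r r', lt_min hr hr', fun b hb ↦ ?_⟩
    rcases hb with hb | hb
    · obtain ⟨ψ, hψ⟩ := hs b hb; exact ⟨ψ, hψ.mono (min_le_left _ _)⟩
    · obtain ⟨ψ, hψ⟩ := ht b hb; exact ⟨ψ, hψ.mono (min_le_right _ _)⟩
  · intro b _
    obtain ⟨r, hr, hb⟩ := hF.exists_isLipschitzLocalSection_nhds b
    exact ⟨_, mem_nhdsWithin_of_mem_nhds hb, r, hr, fun _ h ↦ h⟩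

theorem exists_lift_Icc [ProperSpace E] (hF : HasBoundedInverseFDeriv F C) {p : ℝ → E'}
    {L : ℝ≥0} (hp : LipschitzOnWith L p (Icc 0 1)) {x : E} (hx : F x = p 0) :
    ∃ γ : ℝ → E, γ 0 = x ∧ ContinuousOn γ (Icc 0 1) ∧ ∀ t ∈ Icc 0 1, F (γ t) = p t := by
  obtain ⟨r, hr, hsec⟩ :=
    hF.exists_isLipschitzLocalSection_of_isCompact (isCompact_closedBall x (C * L))
  have hh : 0 < r / (L + 1) := by positivity
  have hLh : L * (r / (L + 1)) < r := by
    rw [mul_div_assoc', div_lt_iff₀ (by positivity)]; nlinarith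
  obtain ⟨n, hn⟩ := exists_nat_ge (1 / (r / (L + 1)))
  obtain ⟨γ, h0, hc, hγp, -⟩ :=
    IsLipschitzLocalSection.exists_lift_Icc_min hsec hp hx hh hLh n
  rw [min_eq_right ((div_le_iff₀ hh).1 hn)] at hc hγp
  exact ⟨γ, h0, hc, hγp⟩

theorem exists_path_lifts [ProperSpace E] (hF : HasBoundedInverseFDeriv F C) {γ : C(I, E')}
    (hγ : LocallyLipschitz γ) {x : E} (hx : F x = γ 0) :
    ∃ Γ : C(I, E), Γ 0 = x ∧ F ∘ Γ = γ := by
  obtain ⟨L, hL⟩ :=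
    (hγ.locallyLipschitzOn (s := univ)).exists_lipschitzOnWith_of_compact isCompact_univ
  rw [lipschitzOnWith_univ] at hL
  have hp : LipschitzWith (L * 1) (IccExtend zero_le_one γ) :=
    hL.comp (LipschitzWith.projIcc zero_le_one)
  obtain ⟨Γ, h0, hc, hlift⟩ := hF.exists_lift_Icc hp.lipschitzOnWith (x := x)
    (by rw [IccExtend_left]; exact hx)
  refine ⟨⟨fun s ↦ Γ s, hc.comp_continuous continuous_subtype_val Subtype.prop⟩, h0,
    funext fun s ↦ ?_⟩
  simpa using hlift s s.2

theorem surjective [ProperSpace E] (hF : HasBoundedInverseFDeriv F C) : Surjective F := by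
  intro y
  obtain ⟨γ, -, -, hγ⟩ := hF.exists_lift_Icc (x := 0)
    (lipschitzWith_lineMap (F 0) y).lipschitzOnWith (by simp)
  exact ⟨γ 1, by simpa using hγ 1 ⟨zero_le_one, le_rfl⟩⟩

theorem injective [ProperSpace E] (hF : HasBoundedInverseFDeriv F C) : Injective F := by
  intro a b hab
  have homeo := hF.isLocalHomeomorph
  have sep := T2Space.isSeparatedMap F
  let seg : C(I, E) := Path.segment a b
  let γ₀ : C(I, E') := (⟨F, homeo.continuous⟩ : C(E, E')).comp seg
  let γ₁ : C(I, E') := .const I (F a)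
  let H : γ₀.HomotopyRel γ₁ {0, 1} :=
    { ContinuousMap.Homotopy.affine γ₀ γ₁ with
      prop' t s hs := by
        rcases hs with rfl | rfl <;> simp [γ₀, γ₁, seg, hab] }
  have hseg : LocallyLipschitz seg :=
    ((lipschitzWith_lineMap a b).comp (LipschitzWith.subtype_val I)).locallyLipschitz
  have hH : ∀ t, LocallyLipschitz (H.curry t) := fun t ↦ by
    have : ⇑(H.curry t) = (AffineMap.lineMap · (F a) (t : ℝ)) ∘ F ∘ seg := by
      ext s; simp [H, γ₀, γ₁]
    rw [this]
    exact (ContDiff.locallyLipschitz (𝕂 := ℝ) (by fun_prop)).comp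
      (hF.locallyLipschitz.comp hseg)
  choose Γ hΓ0 hΓ using fun t ↦ hF.exists_path_lifts (hH t) (x := a) (by simp [H, γ₀, γ₁, seg])
  have hmono := homeo.monodromy_theorem sep H Γ (fun t s ↦ congrFun (hΓ t) s)
    (fun t ↦ (hΓ0 t).trans (hΓ0 0).symm) 1
  have hΓseg : ⇑(Γ 0) = seg := sep.eq_of_comp_eq homeo.isLocallyInjective (Γ 0).continuous
    seg.continuous (by rw [hΓ 0]; ext s; simp [H, γ₀]) 0 (by rw [hΓ0]; simp [seg])
  have hΓa : ⇑(Γ 1) = fun _ ↦ a := sep.eq_of_comp_eq homeo.isLocallyInjective (Γ 1).continuous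
    continuous_const (by rw [hΓ 1]; ext s; simp [H, γ₁]) 0 (hΓ0 1)
  calc a = Γ 1 1 := (congrFun hΓa 1).symm
    _ = Γ 0 1 := hmono
    _ = b := by rw [hΓseg]; simp [seg]

theorem bijective [ProperSpace E] (hF : HasBoundedInverseFDeriv F C) : Bijective F :=
  ⟨hF.injective, hF.surjective⟩

end HasBoundedInverseFDeriv

theorem hadamard_global_inverse (F : ℝ × ℝ → ℝ × ℝ) (C : ℝ)
    (hF : ContDiff ℝ 1 F)
    (hinv : ∀ x : ℝ × ℝ, ∃ g : (ℝ × ℝ) ≃L[ℝ] (ℝ × ℝ),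
      (g : (ℝ × ℝ) →L[ℝ] (ℝ × ℝ)) = fderiv ℝ F x ∧
        ‖(g.symm : (ℝ × ℝ) →L[ℝ] (ℝ × ℝ))‖ ≤ C) :
    Function.Bijective F ∧
      ∃ G : ℝ × ℝ → ℝ × ℝ, ContDiff ℝ 1 G ∧
        Function.LeftInverse G F ∧ Function.RightInverse G F := by
  have hF' : HasBoundedInverseFDeriv F C.toNNReal := fun x ↦ by
    obtain ⟨g, hg, hgC⟩ := hinv x
    refine ⟨g, hg ▸ hF.contDiffAt.hasStrictFDerivAt one_ne_zero, ?_⟩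
    rw [← NNReal.coe_le_coe, coe_nnnorm]
    exact hgC.trans (Real.le_coe_toNNReal C)
  let Φ := hF'.isLocalHomeomorph.toHomeomorphOfBijective hF'.bijective
  exact ⟨hF'.bijective, Φ.symm, Φ.contDiff_symm (fun x ↦ (hF' x).choose_spec.1.hasFDerivAt) hF,
    Φ.symm_apply_apply, Φ.apply_symm_apply⟩
end
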